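/- Let T > 0, let N ≥ 1 be an integer, let f : ℝ → ℂ be smooth and T-periodic, and let g : ℝ → ℂ be smooth and NT-periodic. Then ∫₀^{NT} conj(f(x)) g(x) dx = (1/T) ∫₀^T conj(f(x)) B_T(g)(0, x) dx. -/

import Mathlib

/-- Fourier transform on the torus: `ĝ(z) = ∫_{-NT/2}^{NT/2} e^{-izy} g(y) dy`. -/
noncomputable def fourierT (T : ℝ) (N : ℕ) (g : ℝ → ℂ) (z : ℝ) : ℂ :=
  ∫ y in (-(N * T) / 2)..((N * T) / 2), Complex.exp (-Complex.I * z * y) * g y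

/-- The `T`-periodic Bloch transform
`B_T(g)(ξ,x) = Σ_{ℓ∈ℤ} e^{2πiℓx/T} ĝ(ξ + 2πℓ/T)`. -/
noncomputable def blochT (T : ℝ) (N : ℕ) (g : ℝ → ℂ) (ξ x : ℝ) : ℂ :=
  ∑' ℓ : ℤ, Complex.exp (2 * (Real.pi : ℂ) * Complex.I * (ℓ : ℂ) * (x : ℂ) / (T : ℂ)) *
    fourierT T N g (ξ + 2 * Real.pi * ℓ / T)

/-- Integer indices `k` with `-N/2 ≤ k < N/2`, parametrizing
`Ω_N = {2πk/(NT) : -N/2 ≤ k < N/2}`. -/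
noncomputable def kRange (N : ℕ) : Finset ℤ := Finset.Ico (-((N : ℤ) / 2)) ((N : ℤ) - (N : ℤ) / 2)

/-- The Bloch frequency `ξ_k = 2πk/(NT) ∈ Ω_N`. -/
noncomputable def freq (T : ℝ) (N : ℕ) (k : ℤ) : ℝ := 2 * Real.pi * k / (N * T)

section aux
open Complex Real intervalIntegral
open scoped ContDiff

lemma split_integral {T : ℝ} (N : ℕ) (h : ℝ → ℂ) (hc : Continuous h) :
    ∫ x in (0:ℝ)..(N*T), h x = ∑ m ∈ Finset.range N, ∫ x in (0:ℝ)..T, h (x + m*T) := by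
  have key : ∀ m : ℕ, (∫ x in (0:ℝ)..T, h (x + m*T)) =
      ∫ x in ((m:ℝ)*T)..(((m+1:ℕ):ℝ)*T), h x := by
    intro m
    rw [intervalIntegral.integral_comp_add_right]
    norm_num
    ring_nf
  simp_rw [key]
  rw [intervalIntegral.sum_integral_adjacent_intervals
    (fun k _ => (hc.intervalIntegrable _ _))]
  norm_num

lemma periodic_deriv' {F : ℝ → ℂ} {T : ℝ} (hper : Function.Periodic F T) :
    Function.Periodic (deriv F) T := by
  intro x
  have : (fun y : ℝ => F (y + T)) = F := funext hper
  rw [← deriv_comp_add_const F T x, this]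

lemma coeff_step {T : ℝ} (hT : (0:ℝ) < T) {F : ℝ → ℂ} (hF : ContDiff ℝ ∞ F)
    (hFper : F T = F 0) {n : ℤ} (hn : n ≠ 0) :
    fourierCoeffOn hT F n = (T / (2 * π * I * n)) * fourierCoeffOn hT (deriv F) n := by
  rw [fourierCoeffOn_of_hasDerivAt hT hn
    (fun x _ => ((hF.differentiable (by simp)) x).hasDerivAt)
    ((hF.continuous_deriv (by simp)).intervalIntegrable 0 T)]
  have h1 : fourier (-n) ((0:ℝ) : AddCircle (T - 0)) = 1 := by
    simpa using fourier_eval_zero (T := T - 0) (-n)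
  rw [h1, hFper]
  have h2 : (2 * (π:ℂ) * I * n) ≠ 0 := by
    simp [Real.pi_ne_zero, Complex.I_ne_zero, hn]
  field_simp
  simp

lemma norm_fourier_eq {T : ℝ} (n : ℤ) (x : AddCircle T) : ‖fourier n x‖ = 1 := by
  rw [fourier_apply]
  exact Circle.norm_coe _

lemma coeff_bound {T : ℝ} (hT : (0:ℝ) < T) {F : ℝ → ℂ} (hF : Continuous F) :
    ∃ C : ℝ, 0 ≤ C ∧ ∀ n : ℤ, ‖fourierCoeffOn hT F n‖ ≤ C := by
  obtain ⟨C, hC⟩ := (isCompact_Icc (a := (0:ℝ)) (b := T)).exists_bound_of_continuousOn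
    hF.continuousOn
  refine ⟨max C 0, le_max_right _ _, fun n => ?_⟩
  rw [fourierCoeffOn_eq_integral]
  have hb : ∀ x ∈ Set.uIoc (0:ℝ) T, ‖fourier (-n) ((x:ℝ) : AddCircle (T - 0)) • F x‖ ≤ max C 0 := by
    intro x hx
    rw [Set.uIoc_of_le hT.le] at hx
    rw [norm_smul, norm_fourier_eq, one_mul]
    exact le_max_of_le_left (hC x ⟨hx.1.le, hx.2⟩)
  have h2 := intervalIntegral.norm_integral_le_of_norm_le_const hb
  rw [norm_smul]
  have h3 : ‖(1:ℝ) / (T - 0)‖ = 1 / T := by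
    simp [abs_of_pos hT]
  calc ‖(1:ℝ)/(T-0)‖ * ‖∫ x in (0:ℝ)..T, fourier (-n) ((x:ℝ) : AddCircle (T - 0)) • F x‖
      ≤ (1/T) * (max C 0 * |T - 0|) := by rw [h3]; gcongr
    _ = max C 0 := by
        rw [sub_zero, abs_of_pos hT]; field_simp

lemma summable_coeff {T : ℝ} (hT : (0:ℝ) < T) {F : ℝ → ℂ} (hF : ContDiff ℝ ∞ F)
    (hper : Function.Periodic F T) :
    Summable (fun n : ℤ => fourierCoeffOn hT F n) := by
  have hF1 : ContDiff ℝ ∞ (deriv F) := (contDiff_infty_iff_deriv.mp hF).2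
  have hF2 : ContDiff ℝ ∞ (deriv (deriv F)) := (contDiff_infty_iff_deriv.mp hF1).2
  have hper1 : Function.Periodic (deriv F) T := periodic_deriv' hper
  obtain ⟨C, hC0, hC⟩ := coeff_bound hT (hF2.continuous)
  have hFT : F T = F 0 := by simpa using hper 0
  have hF1T : deriv F T = deriv F 0 := by simpa using hper1 0
  have hbound : ∀ n : ℤ, n ≠ 0 →
      ‖fourierCoeffOn hT F n‖ ≤ (T / (2*π))^2 * C * (1 / (n:ℝ)^2) := by
    intro n hn
    rw [coeff_step hT hF hFT hn, coeff_step hT hF1 hF1T hn]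
    rw [norm_mul, norm_mul]
    have hnorm : ‖(T:ℂ) / (2 * π * I * n)‖ = T / (2*π) * (1 / |(n:ℝ)|) := by
      rw [norm_div]
      simp [norm_mul, Complex.norm_real, abs_of_pos Real.pi_pos, abs_of_pos hT,
        Complex.norm_intCast]
      ring
    rw [hnorm]
    have hn' : (0:ℝ) < |(n:ℝ)| := by
      simp [abs_pos]
      exact_mod_cast hn
    calc (T / (2*π) * (1 / |(n:ℝ)|)) *
          ((T / (2*π) * (1 / |(n:ℝ)|)) * ‖fourierCoeffOn hT (deriv (deriv F)) n‖)
        ≤ (T / (2*π) * (1 / |(n:ℝ)|)) * ((T / (2*π) * (1 / |(n:ℝ)|)) * C) := by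
          gcongr
          exact hC n
      _ = (T / (2*π))^2 * C * (1 / (n:ℝ)^2) := by
          field_simp
          linear_combination (-C) * _root_.sq_abs (n:ℝ)
  apply Summable.of_norm_bounded_eventually (g := fun n : ℤ => (T / (2*π))^2 * C * (1 / (n:ℝ)^2))
  · exact (Real.summable_one_div_int_pow.mpr one_lt_two).mul_left _
  · apply Set.Finite.subset (Set.finite_singleton (0:ℤ))
    intro n hn
    simp only [Set.mem_setOf_eq] at hn
    by_contra h0
    exact hn (hbound n h0)

/-- The key identity: `blochT T N g 0 x = T * (periodization of g) x`. -/
lemma blochT_zero_eq {T : ℝ} (hT : 0 < T) {N : ℕ} (hN : 1 ≤ N) {g : ℝ → ℂ}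
    (hg : ContDiff ℝ ∞ g) (hgper : ∀ x : ℝ, g (x + N * T) = g x) (x : ℝ) :
    blochT T N g 0 x = (T:ℂ) * ∑ m ∈ Finset.range N, g (x + m*T) := by
  haveI : Fact (0 < T) := ⟨hT⟩
  set G : ℝ → ℂ := fun y => ∑ m ∈ Finset.range N, g (y + m*T) with hGdef
  have hGsmooth : ContDiff ℝ ∞ G := by
    apply ContDiff.sum
    intro m _
    exact hg.comp (contDiff_id.add contDiff_const)
  have hGper : Function.Periodic G T := by
    intro y
    have h1 : ∀ m : ℕ, g (y + T + m*T) = g (y + (m+1:ℕ)*T) := by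
      intro m; push_cast; ring_nf
    simp only [hGdef]
    calc ∑ m ∈ Finset.range N, g (y + T + m*T)
        = ∑ m ∈ Finset.range N, g (y + (m+1:ℕ)*T) := by
          exact Finset.sum_congr rfl (fun m _ => h1 m)
      _ = ∑ m ∈ Finset.range N, g (y + m*T) := by
          have e1 := Finset.sum_range_succ' (fun m : ℕ => g (y + m*T)) N
          have e2 := Finset.sum_range_succ (fun m : ℕ => g (y + m*T)) N
          have hNg : g (y + (N:ℕ)*T) = g (y + (0:ℕ)*T) := by
            push_cast
            simpa using hgper y
          linear_combination e2 - e1 + hNg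
  have hGcont : Continuous G := hGsmooth.continuous
  set GC : C(AddCircle T, ℂ) := ⟨hGper.lift, hGcont.quotient_liftOn' _⟩ with hGC
  have hGCcoe : ∀ y : ℝ, GC (y : AddCircle T) = G y := fun y => rfl
  have hcoeff : ∀ ℓ : ℤ, fourierCoeff (⇑GC) ℓ = fourierCoeffOn hT G ℓ := by
    intro ℓ
    rw [fourierCoeff_eq_intervalIntegral _ ℓ 0, fourierCoeffOn_eq_integral]
    simp only [zero_add, sub_zero]
    congr 1
    apply intervalIntegral.integral_congr
    intro y _
    beta_reduce
    rw [hGCcoe]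
    norm_num
  have hsum : Summable (fourierCoeff (⇑GC)) := by
    have := summable_coeff hT hGsmooth hGper
    simpa [funext hcoeff] using this
  have hHS := has_pointwise_sum_fourier_series_of_summable hsum (x : AddCircle T)
  rw [hGCcoe x] at hHS
  -- compute fourierT at the lattice points
  have key : ∀ ℓ : ℤ, fourierT T N g (2*Real.pi*ℓ/T) = (T:ℂ) * fourierCoeff (⇑GC) ℓ := by
    intro ℓ
    set z : ℝ := 2*Real.pi*ℓ/T with hz
    set h : ℝ → ℂ := fun y => Complex.exp (-I * (z:ℂ) * (y:ℂ)) * g y with hh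
    have hconth : Continuous h := by
      apply Continuous.mul _ hg.continuous
      exact Complex.continuous_exp.comp (by continuity)
    have hperh : Function.Periodic h ((N:ℝ)*T) := by
      intro y
      simp only [hh]
      rw [hgper y]
      congr 1
      rw [show (-I * (z:ℂ) * ((y + (N:ℝ)*T : ℝ):ℂ)) = -I*(z:ℂ)*(y:ℂ) + ((-(ℓ*N):ℤ):ℂ) * (2*(π:ℂ)*I) from ?_,
        Complex.exp_add, Complex.exp_int_mul_two_pi_mul_I, mul_one]
      have hT0 : (T:ℂ) ≠ 0 := by exact_mod_cast hT.ne'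
      simp only [hz]
      push_cast
      field_simp
      ring
    have e1 : fourierT T N g z = ∫ y in (0:ℝ)..((N:ℝ)*T), h y := by
      have := hperh.intervalIntegral_add_eq (-((N:ℝ)*T)/2) 0
      rw [show -((N:ℝ)*T)/2 + (N:ℝ)*T = ((N:ℝ)*T)/2 by ring, zero_add] at this
      exact this
    have hterm : ∀ m : ℕ, ∀ y : ℝ, h (y + m*T) = Complex.exp (-I*(z:ℂ)*(y:ℂ)) * g (y + m*T) := by
      intro m y
      simp only [hh]
      congr 1
      rw [show (-I * (z:ℂ) * ((y + (m:ℝ)*T : ℝ):ℂ)) = -I*(z:ℂ)*(y:ℂ) + ((-(ℓ*m):ℤ):ℂ) * (2*(π:ℂ)*I) from ?_,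
        Complex.exp_add, Complex.exp_int_mul_two_pi_mul_I, mul_one]
      have hT0 : (T:ℂ) ≠ 0 := by exact_mod_cast hT.ne'
      simp only [hz]
      push_cast
      field_simp
      ring
    have e2 : fourierT T N g z = ∫ y in (0:ℝ)..T, Complex.exp (-I*(z:ℂ)*(y:ℂ)) * G y := by
      rw [e1, split_integral N h hconth]
      have : ∀ m ∈ Finset.range N, (∫ y in (0:ℝ)..T, h (y + m*T)) =
          ∫ y in (0:ℝ)..T, Complex.exp (-I*(z:ℂ)*(y:ℂ)) * g (y + m*T) := by
        intro m _
        exact intervalIntegral.integral_congr (fun y _ => hterm m y)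
      rw [Finset.sum_congr rfl this,
        ← intervalIntegral.integral_finset_sum (fun m _ => Continuous.intervalIntegrable (by
          apply Continuous.mul
          · exact Complex.continuous_exp.comp (by continuity)
          · exact hg.continuous.comp (by continuity)) 0 T)]
      apply intervalIntegral.integral_congr
      intro y _
      simp only [hGdef, Finset.mul_sum]
    have e3 : (T:ℂ) * fourierCoeff (⇑GC) ℓ = ∫ y in (0:ℝ)..T, Complex.exp (-I*(z:ℂ)*(y:ℂ)) * G y := by
      rw [fourierCoeff_eq_intervalIntegral _ ℓ 0]
      simp only [zero_add, hGCcoe]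
      rw [real_smul, ← mul_assoc]
      have hT0 : (T:ℂ) ≠ 0 := by exact_mod_cast hT.ne'
      rw [show (T:ℂ) * ((1/T : ℝ):ℂ) = 1 from by push_cast; field_simp, one_mul]
      apply intervalIntegral.integral_congr
      intro y _
      beta_reduce
      rw [smul_eq_mul]
      congr 1
      rw [fourier_coe_apply]
      congr 1
      simp only [hz]
      push_cast
      ring
    rw [e2, e3]
  -- conclude
  have hHS2 : HasSum (fun ℓ : ℤ => Complex.exp (2 * (π:ℂ) * I * (ℓ:ℂ) * (x:ℂ) / (T:ℂ)) *
      fourierT T N g (0 + 2*Real.pi*ℓ/T)) ((T:ℂ) * G x) := by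
    have := hHS.mul_left (T:ℂ)
    apply HasSum.congr_fun this
    intro ℓ
    rw [zero_add, key ℓ, smul_eq_mul, fourier_coe_apply]
    ring
  rw [blochT, hHS2.tsum_eq]

end aux

/-- Pairing a `T`-periodic function against an `NT`-periodic function:
`∫₀^{NT} conj(f) g = (1/T) ∫₀^T conj(f) B_T(g)(0,·)`. -/
theorem pairing_zero_bloch (T : ℝ) (hT : 0 < T) (N : ℕ) (hN : 1 ≤ N)
    (f g : ℝ → ℂ) (hf : ContDiff ℝ (⊤ : ℕ∞) f) (hg : ContDiff ℝ (⊤ : ℕ∞) g)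
    (hfper : ∀ x : ℝ, f (x + T) = f x) (hgper : ∀ x : ℝ, g (x + N * T) = g x) :
    (∫ x in (0:ℝ)..(N * T), (starRingEnd ℂ) (f x) * g x) =
      (1 / (T : ℂ)) * ∫ x in (0:ℝ)..T, (starRingEnd ℂ) (f x) * blochT T N g 0 x := by
  have hT0 : (T:ℂ) ≠ 0 := by exact_mod_cast hT.ne'
  have hg' : ContDiff ℝ (⊤:ℕ∞) g := hg.of_le (by simp)
  have hb : ∀ x : ℝ, blochT T N g 0 x = (T:ℂ) * ∑ m ∈ Finset.range N, g (x + m*T) :=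
    fun x => blochT_zero_eq hT hN hg' hgper x
  have hfc : Continuous fun x => (starRingEnd ℂ) (f x) :=
    Complex.continuous_conj.comp hf.continuous
  have hfm : ∀ (m : ℕ) (x : ℝ), f (x + m*T) = f x := by
    intro m x
    have := (Function.Periodic.nat_mul (hfper : Function.Periodic f T) m) x
    simpa using this
  calc (∫ x in (0:ℝ)..(N*T), (starRingEnd ℂ) (f x) * g x)
      = ∑ m ∈ Finset.range N, ∫ x in (0:ℝ)..T,
          (starRingEnd ℂ) (f (x + m*T)) * g (x + m*T) :=
        split_integral N _ (hfc.mul hg.continuous)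
    _ = ∑ m ∈ Finset.range N, ∫ x in (0:ℝ)..T, (starRingEnd ℂ) (f x) * g (x + m*T) := by
        refine Finset.sum_congr rfl (fun m _ => intervalIntegral.integral_congr fun x _ => ?_)
        beta_reduce
        rw [hfm m x]
    _ = ∫ x in (0:ℝ)..T, ∑ m ∈ Finset.range N, (starRingEnd ℂ) (f x) * g (x + m*T) := by
        rw [intervalIntegral.integral_finset_sum]
        intro m _
        exact (hfc.mul (hg.continuous.comp (by continuity))).intervalIntegrable 0 T
    _ = ∫ x in (0:ℝ)..T, (starRingEnd ℂ) (f x) * ∑ m ∈ Finset.range N, g (x + m*T) := by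
        refine intervalIntegral.integral_congr fun x _ => ?_
        beta_reduce
        rw [Finset.mul_sum]
    _ = (1 / (T:ℂ)) * ∫ x in (0:ℝ)..T, (starRingEnd ℂ) (f x) * blochT T N g 0 x := by
        have h1 : (∫ x in (0:ℝ)..T, (starRingEnd ℂ) (f x) * blochT T N g 0 x) =
            ∫ x in (0:ℝ)..T, (T:ℂ) * ((starRingEnd ℂ) (f x) *
              ∑ m ∈ Finset.range N, g (x + m*T)) := by
          refine intervalIntegral.integral_congr fun x _ => ?_
          beta_reduce
          rw [hb x]
          ring
        rw [h1, intervalIntegral.integral_const_mul, ← mul_assoc, one_div,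
          inv_mul_cancel₀ hT0, one_mul]
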